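/- Let λ ≥ -1/2 be a real number and let Δ ≥ 3 satisfy Δ = 2λ+6. If U is a unicyclic graph with n vertices and maximum degree Δ, then GRM_λ(U) ≥ 6(2+λ)³ + (n-2λ-6)(2+λ)². -/

import Mathlib

open SimpleGraph

/-- Degree of a vertex (classical decidability). -/
noncomputable def deg {V : Type*} [Fintype V] (G : SimpleGraph V) (v : V) : ℕ :=
  letI := Classical.decEq V
  letI : DecidableRel G.Adj := Classical.decRel _
  G.degree v

/-- Maximum degree of a graph (classical decidability). -/
noncomputable def maxDeg {V : Type*} [Fintype V] (G : SimpleGraph V) : ℕ :=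
  letI := Classical.decEq V
  letI : DecidableRel G.Adj := Classical.decRel _
  G.maxDegree

/-- The general reduced second Zagreb index
`GRM_λ(G) = Σ_{ab ∈ E(G)} (deg a + λ)(deg b + λ)`. -/
noncomputable def GRM {V : Type*} [Fintype V] (l : ℝ) (G : SimpleGraph V) : ℝ :=
  letI := Classical.decEq V
  letI : DecidableRel G.Adj := Classical.decRel _
  ∑ e ∈ G.edgeFinset,
    Sym2.lift ⟨fun a b => ((G.degree a : ℝ) + l) * ((G.degree b : ℝ) + l),
      fun a b => by ring⟩ e

/-- A unicyclic graph: connected with exactly as many edges as vertices. -/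
def IsUnicyclic {V : Type*} [Fintype V] (G : SimpleGraph V) : Prop :=
  G.Connected ∧ G.edgeSet.ncard = Fintype.card V

/-- A vertex lies on a cycle of `G`. -/
def OnCycle {V : Type*} (G : SimpleGraph V) (v : V) : Prop :=
  ∃ (u : V) (w : G.Walk u u), w.IsCycle ∧ v ∈ w.support

/-!
Put `c = 2 + λ` and `x_v = deg v - 2`, so that an edge `ab` contributes `(x_a + c)(x_b + c)`.
Summed over the edges, the linear part is `c Σ_v deg v · x_v + c² |E|`. The product `x_a x_b`
is negative only on an edge with a leaf end, where it is at least `-(Δ - 2) = -2c`; charging it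
to the leaf gives `GRM ≥ c² n + c (Σ_v deg v (deg v - 2) - 2 · #leaves)`. As `|E| = n`, we have
`Σ_v x_v = 0`, so the bracket is `Σ_v ((d_v - 2)(d_v - 3) - 2 [d_v = 1])`: every summand is
nonnegative and a vertex of degree `Δ` alone contributes `(Δ - 2)(Δ - 3) = 2c (2c - 1)`.
-/

namespace SimpleGraph

variable {V : Type*} [Fintype V] (G : SimpleGraph V) [DecidableRel G.Adj]

theorem sum_darts_fst {M : Type*} [AddCommMonoid M] (f : V → M) :
    ∑ d : G.Dart, f d.fst = ∑ v, G.degree v • f v := by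
  classical
  rw [← Finset.sum_fiberwise Finset.univ fun d : G.Dart => d.fst]
  refine Finset.sum_congr rfl fun v _ => ?_
  rw [Finset.sum_congr rfl fun d hd => by rw [(Finset.mem_filter.1 hd).2], Finset.sum_const]
  congr 1
  convert G.dart_fst_fiber_card_eq_degree v

theorem sum_edgeFinset_lift_add {M : Type*} [AddCommMonoid M] (f : V → M) :
    ∑ e ∈ G.edgeFinset, Sym2.lift ⟨fun a b => f a + f b, fun _ _ => add_comm _ _⟩ e =
      ∑ v, G.degree v • f v := by
  classical
  rw [← sum_darts_fst, ← Finset.sum_fiberwise_of_maps_to (g := Dart.edge)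
    (fun d _ => (G.mem_edgeFinset).2 d.edge_mem)]
  refine Finset.sum_congr rfl fun e he => ?_
  induction e using Sym2.ind with
  | _ a b =>
    let d : G.Dart := ⟨(a, b), G.mem_edgeFinset.1 he⟩
    rw [show s(a, b) = d.edge from rfl, Dart.edge_fiber, Finset.sum_pair d.symm_ne.symm]
    rfl

end SimpleGraph

open Finset

theorem sub_two_mul_sub_two_ge_of_le {a b Δ : ℕ} (hΔ : 2 ≤ Δ) (ha : 1 ≤ a) (hb : 1 ≤ b)
    (haΔ : a ≤ Δ) (hbΔ : b ≤ Δ) :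
    -((Δ : ℝ) - 2) * ((if a = 1 then 1 else 0) + (if b = 1 then 1 else 0)) ≤
      ((a : ℝ) - 2) * ((b : ℝ) - 2) := by
  have hΔ' : (2 : ℝ) ≤ Δ := by exact_mod_cast hΔ
  have haΔ' : (a : ℝ) ≤ Δ := by exact_mod_cast haΔ
  have hbΔ' : (b : ℝ) ≤ Δ := by exact_mod_cast hbΔ
  rcases eq_or_ne a 1 with rfl | ha1 <;> rcases eq_or_ne b 1 with rfl | hb1
  · norm_num; linarith
  · simp only [if_neg hb1, if_true]; push_cast; linarith
  · simp only [if_neg ha1, if_true]; push_cast; linarith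
  · have ha2 : (2 : ℝ) ≤ a := by exact_mod_cast (by omega : 2 ≤ a)
    have hb2 : (2 : ℝ) ≤ b := by exact_mod_cast (by omega : 2 ≤ b)
    simp only [if_neg ha1, if_neg hb1]
    nlinarith

theorem sub_two_mul_sub_three_sub_leaf_nonneg (d : ℕ) :
    0 ≤ ((d : ℝ) - 2) * ((d : ℝ) - 3) - 2 * (if d = 1 then 1 else 0) := by
  rcases le_or_gt d 3 with hd | hd
  · interval_cases d <;> norm_num
  · have hd' : (4 : ℝ) ≤ d := by exact_mod_cast hd
    rw [if_neg (by omega)]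
    nlinarith

section
variable {V : Type*} [Fintype V] (G : SimpleGraph V) [DecidableRel G.Adj]

theorem GRM_eq_sum (l : ℝ) :
    GRM l G = ∑ e ∈ G.edgeFinset, Sym2.lift
      ⟨fun a b => ((G.degree a : ℝ) + l) * ((G.degree b : ℝ) + l), fun _ _ => mul_comm _ _⟩ e := by
  unfold GRM
  convert rfl

theorem maxDeg_eq_maxDegree : maxDeg G = G.maxDegree := by
  unfold maxDeg
  convert rfl

theorem GRM_ge_of_degree_le (l : ℝ) {Δ : ℕ} (hΔ : 2 ≤ Δ) (hdeg : ∀ v, G.degree v ≤ Δ) :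
    (2 + l) ^ 2 * #G.edgeFinset + (2 + l) * ∑ v, (G.degree v : ℝ) * ((G.degree v : ℝ) - 2) -
      ((Δ : ℝ) - 2) * #{v | G.degree v = 1} ≤ GRM l G := by
  set w : V → ℝ := fun v => (2 + l) * ((G.degree v : ℝ) - 2) -
    ((Δ : ℝ) - 2) * (if G.degree v = 1 then 1 else 0)
  have hw : (2 + l) * ∑ v, (G.degree v : ℝ) * ((G.degree v : ℝ) - 2) -
      ((Δ : ℝ) - 2) * #{v | G.degree v = 1} =
      ∑ e ∈ G.edgeFinset, Sym2.lift ⟨fun a b => w a + w b, fun _ _ => add_comm _ _⟩ e := by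
    rw [sum_edgeFinset_lift_add, natCast_card_filter, Finset.mul_sum, Finset.mul_sum,
      ← Finset.sum_sub_distrib]
    refine Finset.sum_congr rfl fun v _ => ?_
    simp only [w, nsmul_eq_mul]
    split_ifs with h
    · rw [h]; push_cast; ring
    · ring
  rw [add_sub_assoc, GRM_eq_sum, hw, mul_comm, ← nsmul_eq_mul, ← Finset.sum_const,
    ← Finset.sum_add_distrib]
  refine Finset.sum_le_sum fun e he => ?_
  induction e using Sym2.ind with
  | _ a b =>
    have hab : G.Adj a b := G.mem_edgeFinset.1 he
    have key := sub_two_mul_sub_two_ge_of_le hΔ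
      (G.degree_pos_iff_exists_adj a |>.2 ⟨b, hab⟩) (G.degree_pos_iff_exists_adj b |>.2 ⟨a, hab.symm⟩)
      (hdeg a) (hdeg b)
    simp only [Sym2.lift_mk, w]
    linear_combination key

theorem sum_degree_sub_two_eq_zero (hE : #G.edgeFinset = Fintype.card V) :
    ∑ v, ((G.degree v : ℝ) - 2) = 0 := by
  rw [Finset.sum_sub_distrib, ← Nat.cast_sum, sum_degrees_eq_twice_card_edges, hE,
    Finset.sum_const, Finset.card_univ, nsmul_eq_mul]
  push_cast
  ring

theorem le_sum_degree_mul_sub_two_sub_card_leaves (hE : #G.edgeFinset = Fintype.card V) {v : V}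
    (hv : G.degree v ≠ 1) :
    ((G.degree v : ℝ) - 2) * ((G.degree v : ℝ) - 3) ≤
      ∑ u, (G.degree u : ℝ) * ((G.degree u : ℝ) - 2) - 2 * #{u | G.degree u = 1} := by
  have hsplit : ∑ u, (G.degree u : ℝ) * ((G.degree u : ℝ) - 2) - 2 * #{u | G.degree u = 1} =
      ∑ u, (((G.degree u : ℝ) - 2) * ((G.degree u : ℝ) - 3) -
        2 * (if G.degree u = 1 then 1 else 0)) + 3 * ∑ u, ((G.degree u : ℝ) - 2) := by
    rw [natCast_card_filter, Finset.mul_sum, Finset.mul_sum, ← Finset.sum_sub_distrib,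
      ← Finset.sum_add_distrib]
    exact Finset.sum_congr rfl fun u _ => by ring
  rw [hsplit, sum_degree_sub_two_eq_zero G hE, mul_zero, add_zero]
  simpa [hv] using Finset.single_le_sum
    (fun u _ => sub_two_mul_sub_three_sub_leaf_nonneg (G.degree u)) (mem_univ v)

end

theorem stmt7_general {V : Type*} [Fintype V] (l : ℝ) (hl : -1/2 ≤ l)
    (n Δ : ℕ) (heq : (Δ : ℝ) = 2 * l + 6)
    (U : SimpleGraph V) (hU : IsUnicyclic U)
    (hcard : Fintype.card V = n) (hmax : maxDeg U = Δ) :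
    GRM l U ≥ 6 * (2 + l) ^ 3 + ((n : ℝ) - 2 * l - 6) * (2 + l) ^ 2 := by
  classical
  have hΔ : 2 ≤ Δ := by exact_mod_cast (show (2 : ℝ) ≤ Δ by linarith)
  rw [maxDeg_eq_maxDegree] at hmax
  have hE : #U.edgeFinset = Fintype.card V := by
    rw [← Set.ncard_coe_finset, coe_edgeFinset]
    exact hU.2
  have : Nonempty V := by
    by_contra h
    rw [not_nonempty_iff] at h
    simp only [maxDegree_of_subsingleton] at hmax
    omega
  obtain ⟨v, hv⟩ := U.exists_maximal_degree_vertex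
  have hGRM := GRM_ge_of_degree_le U l hΔ (fun u => hmax ▸ U.degree_le_maxDegree u)
  have hleaves := le_sum_degree_mul_sub_two_sub_card_leaves U hE (v := v) (by omega)
  rw [← hv, hmax, heq] at hleaves
  rw [hE, hcard, heq] at hGRM
  linear_combination hGRM + mul_le_mul_of_nonneg_left hleaves (show 0 ≤ 2 + l by linarith)

theorem stmt7 {V : Type*} [Fintype V] (l : ℝ) (hl : -1/2 ≤ l)
    (n Δ : ℕ) (hΔ3 : 3 ≤ Δ) (heq : (Δ : ℝ) = 2 * l + 6)
    (U : SimpleGraph V) (hU : IsUnicyclic U)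
    (hcard : Fintype.card V = n) (hmax : maxDeg U = Δ) :
    GRM l U ≥ 6 * (2 + l) ^ 3 + ((n : ℝ) - 2 * l - 6) * (2 + l) ^ 2 :=
  stmt7_general l hl n Δ heq U hU hcard hmax
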